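/- In 𝒜q, for every n ∈ ℕ the following recursive relations hold: (i) G_{n+1} = ((q²−q⁻²)/(2(q^{n+1}+q^{−n−1})))·Σ_{k=0}^{n} q^{−n+2k}·(W_{-k}·W_{n+1-k} + W_{k+1}·W_{k-n}) − ((q−q⁻¹)/(2ρ(q^{n+1}+q^{−n−1})))·Σ_{k=0}^{n−1} q^{−n+1+2k}·(G_{k+1}·G̃_{n-k} + G̃_{k+1}·G_{n-k}) + ((q+q⁻¹)/2)·[W_{n+1}, W_0] + Δ_{n+1}/2, where W_{k-n} denotes W_{-(n-k)}; (ii) G̃_{n+1} = G_{n+1} + (q+q⁻¹)·[W_0, W_{n+1}]; (iii) W_{-n-1} = ρ⁻¹·[W_0, G_{n+1}]_q; (iv) W_{n+2} = ρ⁻¹·[G_{n+1}, W_1]_q. -/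

import Mathlib

/-!
(ii)–(iv) are defining relations of `𝒜q` solved for their left-hand sides, since `q + q⁻¹` and
`ρ` are invertible.

For (i), `σ` exchanges the two halves of each of the symmetrised sums `S_W = symmSumW` and
`S_G = symmSumG`, so
`Y_{n+1} + σ(Y_{n+1}) = (q^{n+1} + q^{-n-1})(G_{n+1} + G̃_{n+1}) − (q² − q⁻²)·S_W + ((q − q⁻¹)/ρ)·S_G`
and `Δ_{n+1}` determines `G_{n+1} + G̃_{n+1}`. The relations `[W_{-n}, W_1] = −[W_{n+1}, W_0]` and
`[W_{-n}, W_1] = (G̃_{n+1} − G_{n+1})/(q + q⁻¹)` determine `G_{n+1} − G̃_{n+1}`.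
-/

noncomputable section

namespace Alt

/-- The base field `F = ℚ(q)`. -/
abbrev F : Type := RatFunc ℚ

/-- The indeterminate `q`. -/
def q : F := RatFunc.X

/-- Commutator `[x,y] = xy - yx`. -/
def br {A : Type*} [Ring A] (x y : A) : A := x * y - y * x

/-- `q`-commutator `[x,y]_q = q·xy - q⁻¹·yx`. -/
def qbr {A : Type*} [Ring A] [Algebra F A] (x y : A) : A :=
  q • (x * y) - q⁻¹ • (y * x)

/-- `q⁻¹`-commutator `[x,y]_{q⁻¹} = q⁻¹·xy - q·yx`. -/
def qbr' {A : Type*} [Ring A] [Algebra F A] (x y : A) : A :=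
  q⁻¹ • (x * y) - q • (y * x)

/-- Generators of the algebra `𝒜q`: `wm k ↦ W_{-k}`, `wp k ↦ W_{k+1}`,
`g k ↦ G_{k+1}`, `gt k ↦ G̃_{k+1}`. -/
inductive Gen : Type
  | wm : ℕ → Gen
  | wp : ℕ → Gen
  | g : ℕ → Gen
  | gt : ℕ → Gen

/-- The free `F`-algebra on the generators. -/
abbrev FA : Type := FreeAlgebra F Gen

/-- `W_{-k}` in the free algebra. -/
def fWm (k : ℕ) : FA := FreeAlgebra.ι F (Gen.wm k)
/-- `W_{k+1}` in the free algebra. -/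
def fWp (k : ℕ) : FA := FreeAlgebra.ι F (Gen.wp k)
/-- `G_{k+1}` in the free algebra. -/
def fG (k : ℕ) : FA := FreeAlgebra.ι F (Gen.g k)
/-- `G̃_{k+1}` in the free algebra. -/
def fGt (k : ℕ) : FA := FreeAlgebra.ι F (Gen.gt k)

/-- The defining relations of `𝒜q` (with parameter `ρ`). -/
inductive rel (ρ : F) : FA → FA → Prop
  | r1a (k : ℕ) : rel ρ (br (fWm 0) (fWp k)) ((q + q⁻¹)⁻¹ • (fGt k - fG k))
  | r1b (k : ℕ) : rel ρ (br (fWm k) (fWp 0)) ((q + q⁻¹)⁻¹ • (fGt k - fG k))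
  | r2a (k : ℕ) : rel ρ (qbr (fWm 0) (fG k)) (ρ • fWm (k + 1))
  | r2b (k : ℕ) : rel ρ (qbr (fGt k) (fWm 0)) (ρ • fWm (k + 1))
  | r3a (k : ℕ) : rel ρ (qbr (fG k) (fWp 0)) (ρ • fWp (k + 1))
  | r3b (k : ℕ) : rel ρ (qbr (fWp 0) (fGt k)) (ρ • fWp (k + 1))
  | r4a (k l : ℕ) : rel ρ (br (fWm k) (fWm l)) 0
  | r4b (k l : ℕ) : rel ρ (br (fWp k) (fWp l)) 0
  | r5 (k l : ℕ) : rel ρ (br (fWm k) (fWp l) + br (fWp k) (fWm l)) 0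
  | r6 (k l : ℕ) : rel ρ (br (fWm k) (fG l) + br (fG k) (fWm l)) 0
  | r7 (k l : ℕ) : rel ρ (br (fWm k) (fGt l) + br (fGt k) (fWm l)) 0
  | r8 (k l : ℕ) : rel ρ (br (fWp k) (fG l) + br (fG k) (fWp l)) 0
  | r9 (k l : ℕ) : rel ρ (br (fWp k) (fGt l) + br (fGt k) (fWp l)) 0
  | r10a (k l : ℕ) : rel ρ (br (fG k) (fG l)) 0
  | r10b (k l : ℕ) : rel ρ (br (fGt k) (fGt l)) 0
  | r11 (k l : ℕ) : rel ρ (br (fGt k) (fG l) + br (fG k) (fGt l)) 0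

/-- The algebra `𝒜q`: the quotient of the free algebra by the two-sided ideal
generated by the defining relations. -/
abbrev Aq (ρ : F) : Type := RingQuot (rel ρ)

/-- The generator `W_{-k}` of `𝒜q`. -/
def Wm (ρ : F) (k : ℕ) : Aq ρ := RingQuot.mkAlgHom F (rel ρ) (fWm k)
/-- The generator `W_{k+1}` of `𝒜q`. -/
def Wp (ρ : F) (k : ℕ) : Aq ρ := RingQuot.mkAlgHom F (rel ρ) (fWp k)
/-- The generator `G_{k+1}` of `𝒜q`. -/
def G (ρ : F) (k : ℕ) : Aq ρ := RingQuot.mkAlgHom F (rel ρ) (fG k)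
/-- The generator `G̃_{k+1}` of `𝒜q`. -/
def Gt (ρ : F) (k : ℕ) : Aq ρ := RingQuot.mkAlgHom F (rel ρ) (fGt k)

/-- The element `Y_{n+1}` of `𝒜q`. -/
def Y (ρ : F) (n : ℕ) : Aq ρ :=
  q ^ (-(n : ℤ) - 1) • G ρ n + q ^ ((n : ℤ) + 1) • Gt ρ n -
    (q ^ (2 : ℤ) - q ^ (-2 : ℤ)) •
      ∑ k ∈ Finset.range (n + 1), q ^ (2 * (k : ℤ) - (n : ℤ)) • (Wm ρ k * Wp ρ (n - k)) +
    ((q - q⁻¹) / ρ) •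
      ∑ k ∈ Finset.range n, q ^ (2 * (k : ℤ) - (n : ℤ) + 1) • (Gt ρ k * G ρ (n - 1 - k))

/-- The central element `Δ_{n+1} = (Y_{n+1} + σ(Y_{n+1}))/(q^{n+1} + q^{-n-1})`,
for a given algebra automorphism `σ` of `𝒜q`. -/
def Δd (ρ : F) (σ : Aq ρ ≃ₐ[F] Aq ρ) (n : ℕ) : Aq ρ :=
  (q ^ ((n : ℤ) + 1) + q ^ (-(n : ℤ) - 1))⁻¹ • (Y ρ n + σ (Y ρ n))

lemma q_ne_zero : q ≠ 0 := RatFunc.X_ne_zero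

lemma q_zpow_add_q_zpow_neg_ne_zero (n : ℕ) : q ^ ((n : ℤ) + 1) + q ^ (-(n : ℤ) - 1) ≠ 0 := by
  have hX : (Polynomial.X ^ (2 * (n + 1)) + Polynomial.C 1 : Polynomial ℚ) ≠ 0 :=
    Polynomial.X_pow_add_C_ne_zero (by omega) 1
  have hq : q ^ (2 * (n + 1)) + 1 ≠ 0 := by
    simpa [q] using (map_ne_zero_iff _ (RatFunc.algebraMap_injective ℚ)).2 hX
  have hfactor : q ^ ((n : ℤ) + 1) + q ^ (-(n : ℤ) - 1) =
      q ^ (-(n : ℤ) - 1) * (q ^ (2 * (n + 1)) + 1) := by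
    rw [mul_add, mul_one, ← zpow_natCast, ← zpow_add₀ q_ne_zero]
    push_cast
    ring_nf
  rw [hfactor]
  exact mul_ne_zero (zpow_ne_zero _ q_ne_zero) hq

lemma q_add_q_inv_ne_zero : q + q⁻¹ ≠ 0 := by
  simpa using q_zpow_add_q_zpow_neg_ne_zero 0

section Relations

variable (ρ : F)

lemma br_Wm_zero_Wp (k : ℕ) : br (Wm ρ 0) (Wp ρ k) = (q + q⁻¹)⁻¹ • (Gt ρ k - G ρ k) := by
  simpa [br, Wm, Wp, G, Gt] using RingQuot.mkAlgHom_rel F (rel.r1a (ρ := ρ) k)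

lemma br_Wm_Wp_zero (k : ℕ) : br (Wm ρ k) (Wp ρ 0) = (q + q⁻¹)⁻¹ • (Gt ρ k - G ρ k) := by
  simpa [br, Wm, Wp, G, Gt] using RingQuot.mkAlgHom_rel F (rel.r1b (ρ := ρ) k)

lemma qbr_Wm_zero_G (k : ℕ) : qbr (Wm ρ 0) (G ρ k) = ρ • Wm ρ (k + 1) := by
  simpa [qbr, Wm, G] using RingQuot.mkAlgHom_rel F (rel.r2a (ρ := ρ) k)

lemma qbr_G_Wp_zero (k : ℕ) : qbr (G ρ k) (Wp ρ 0) = ρ • Wp ρ (k + 1) := by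
  simpa [qbr, Wp, G] using RingQuot.mkAlgHom_rel F (rel.r3a (ρ := ρ) k)

lemma br_Wm_Wp_add_br_Wp_Wm (k l : ℕ) : br (Wm ρ k) (Wp ρ l) + br (Wp ρ k) (Wm ρ l) = 0 := by
  simpa [br, Wm, Wp] using RingQuot.mkAlgHom_rel F (rel.r5 (ρ := ρ) k l)

lemma Gt_eq_G_add_smul_br (n : ℕ) : Gt ρ n = G ρ n + (q + q⁻¹) • br (Wm ρ 0) (Wp ρ n) := by
  rw [br_Wm_zero_Wp, smul_smul, mul_inv_cancel₀ q_add_q_inv_ne_zero, one_smul]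
  abel

lemma smul_br_Wp_Wm_zero (n : ℕ) : (q + q⁻¹) • br (Wp ρ n) (Wm ρ 0) = G ρ n - Gt ρ n := by
  rw [eq_neg_of_add_eq_zero_right (br_Wm_Wp_add_br_Wp_Wm ρ n 0), br_Wm_Wp_zero, smul_neg,
    smul_smul, mul_inv_cancel₀ q_add_q_inv_ne_zero, one_smul, neg_sub]

lemma Wm_succ_eq (hρ : ρ ≠ 0) (n : ℕ) : Wm ρ (n + 1) = ρ⁻¹ • qbr (Wm ρ 0) (G ρ n) := by
  rw [qbr_Wm_zero_G, smul_smul, inv_mul_cancel₀ hρ, one_smul]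

lemma Wp_succ_eq (hρ : ρ ≠ 0) (n : ℕ) : Wp ρ (n + 1) = ρ⁻¹ • qbr (G ρ n) (Wp ρ 0) := by
  rw [qbr_G_Wp_zero, smul_smul, inv_mul_cancel₀ hρ, one_smul]

end Relations

def symmSumW (ρ : F) (n : ℕ) : Aq ρ :=
  ∑ k ∈ Finset.range (n + 1), q ^ (2 * (k : ℤ) - (n : ℤ)) •
    (Wm ρ k * Wp ρ (n - k) + Wp ρ k * Wm ρ (n - k))

def symmSumG (ρ : F) (n : ℕ) : Aq ρ :=
  ∑ k ∈ Finset.range n, q ^ (2 * (k : ℤ) - (n : ℤ) + 1) •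
    (G ρ k * Gt ρ (n - 1 - k) + Gt ρ k * G ρ (n - 1 - k))

section Involution

variable {ρ : F} (σ : Aq ρ ≃ₐ[F] Aq ρ)
  (hσ1 : ∀ k : ℕ, σ (Wm ρ k) = Wp ρ k) (hσ2 : ∀ k : ℕ, σ (Wp ρ k) = Wm ρ k)
  (hσ3 : ∀ k : ℕ, σ (G ρ k) = Gt ρ k) (hσ4 : ∀ k : ℕ, σ (Gt ρ k) = G ρ k)
include hσ1 hσ2 hσ3 hσ4

lemma Y_add_map_Y (n : ℕ) :
    Y ρ n + σ (Y ρ n) =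
      (q ^ ((n : ℤ) + 1) + q ^ (-(n : ℤ) - 1)) • (G ρ n + Gt ρ n) -
        (q ^ (2 : ℤ) - q ^ (-2 : ℤ)) • symmSumW ρ n + ((q - q⁻¹) / ρ) • symmSumG ρ n := by
  simp only [Y, symmSumW, symmSumG, map_add, map_sub, map_smul, map_sum, map_mul,
    hσ1, hσ2, hσ3, hσ4, smul_add, add_smul, Finset.sum_add_distrib]
  abel

lemma inv_two_smul_Δd (n : ℕ) :
    (2⁻¹ : F) • Δd ρ σ n = (2⁻¹ : F) • (G ρ n + Gt ρ n) -
      ((q ^ (2 : ℤ) - q ^ (-2 : ℤ)) / (2 * (q ^ ((n : ℤ) + 1) + q ^ (-(n : ℤ) - 1)))) •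
        symmSumW ρ n +
      ((q - q⁻¹) / (2 * ρ * (q ^ ((n : ℤ) + 1) + q ^ (-(n : ℤ) - 1)))) • symmSumG ρ n := by
  have hD := q_zpow_add_q_zpow_neg_ne_zero n
  rw [Δd, Y_add_map_Y σ hσ1 hσ2 hσ3 hσ4, smul_smul, smul_add, smul_sub]
  simp only [smul_smul]
  congr 3 <;> field_simp

end Involution

/-- The recursive relations of Lemma 2.6 of the paper, where `σ` is the algebra
automorphism of `𝒜q` determined by `σ(W_{-k}) = W_{k+1}`, `σ(W_{k+1}) = W_{-k}`,
`σ(G_{k+1}) = G̃_{k+1}`, `σ(G̃_{k+1}) = G_{k+1}`. -/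
theorem statement4 (ρ : F) (hρ : ρ ≠ 0) (σ : Aq ρ ≃ₐ[F] Aq ρ)
    (hσ1 : ∀ k : ℕ, σ (Wm ρ k) = Wp ρ k) (hσ2 : ∀ k : ℕ, σ (Wp ρ k) = Wm ρ k)
    (hσ3 : ∀ k : ℕ, σ (G ρ k) = Gt ρ k) (hσ4 : ∀ k : ℕ, σ (Gt ρ k) = G ρ k)
    (n : ℕ) :
    G ρ n =
      ((q ^ (2 : ℤ) - q ^ (-2 : ℤ)) / (2 * (q ^ ((n : ℤ) + 1) + q ^ (-(n : ℤ) - 1)))) •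
        ∑ k ∈ Finset.range (n + 1), q ^ (2 * (k : ℤ) - (n : ℤ)) •
          (Wm ρ k * Wp ρ (n - k) + Wp ρ k * Wm ρ (n - k)) -
      ((q - q⁻¹) / (2 * ρ * (q ^ ((n : ℤ) + 1) + q ^ (-(n : ℤ) - 1)))) •
        ∑ k ∈ Finset.range n, q ^ (2 * (k : ℤ) - (n : ℤ) + 1) •
          (G ρ k * Gt ρ (n - 1 - k) + Gt ρ k * G ρ (n - 1 - k)) +
      ((q + q⁻¹) / 2) • br (Wp ρ n) (Wm ρ 0) + (2⁻¹ : F) • Δd ρ σ n ∧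
    Gt ρ n = G ρ n + (q + q⁻¹) • br (Wm ρ 0) (Wp ρ n) ∧
    Wm ρ (n + 1) = ρ⁻¹ • qbr (Wm ρ 0) (G ρ n) ∧
    Wp ρ (n + 1) = ρ⁻¹ • qbr (G ρ n) (Wp ρ 0) := by
  refine ⟨?_, Gt_eq_G_add_smul_br ρ n, Wm_succ_eq ρ hρ n, Wp_succ_eq ρ hρ n⟩
  have hhalves : (2⁻¹ : F) • (G ρ n - Gt ρ n) + (2⁻¹ : F) • (G ρ n + Gt ρ n) = G ρ n := by
    rw [← smul_add, sub_add_add_cancel, ← two_smul F, smul_smul,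
      inv_mul_cancel₀ two_ne_zero, one_smul]
  change G ρ n = (_ : F) • symmSumW ρ n - (_ : F) • symmSumG ρ n + _ + _
  rw [inv_two_smul_Δd σ hσ1 hσ2 hσ3 hσ4, show (q + q⁻¹) / 2 = 2⁻¹ * (q + q⁻¹) by ring, mul_smul,
    smul_br_Wp_Wm_zero]
  conv_lhs => rw [← hhalves]
  abel

end Alt
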